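/- arXiv:1707.09084 — 6 statements merged into one kernel-verified Lean document; each statement's English description precedes it below -/
import Mathlib

section
/- Let θ : ℕ → ℝ satisfy θ₀ = 1, θ_{k+1} ∈ (0,1), and θ_{k+1}² = θ_k²(1 - θ_{k+1}) for all k ≥ 0. Then θ_{k-1} ≤ 2/(k+1) for all k ≥ 1 (equivalently, θ_k ≤ 2/(k+2) for all k ≥ 0). -/
theorem nesterov_theta_bound
    (θ : ℕ → ℝ) (hθ0 : θ 0 = 1)
    (hmem : ∀ k : ℕ, θ (k + 1) ∈ Set.Ioo (0 : ℝ) 1)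
    (hrec : ∀ k : ℕ, θ (k + 1) ^ 2 = θ k ^ 2 * (1 - θ (k + 1))) :
    ∀ k : ℕ, θ k ≤ 2 / (k + 2) := by
  have hpos : ∀ k, 0 < θ k := by
    intro k
    cases k with
    | zero => rw [hθ0]; norm_num
    | succ n => exact (hmem n).1
  have key : ∀ k : ℕ, ((k : ℝ) + 2) / 2 ≤ 1 / θ k := by
    intro k
    induction k with
    | zero => rw [hθ0]; norm_num
    | succ n ih =>
      have ha := hpos n
      have hb := (hmem n).1
      have hb1 := (hmem n).2
      have hr := hrec n
      have step : 1 / θ n + 1 / 2 ≤ 1 / θ (n + 1) := by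
        rw [div_add_div _ _ (ne_of_gt ha) (by norm_num), div_le_div_iff₀ (by positivity) hb]
        nlinarith [sq_nonneg (θ n - θ (n+1)), sq_nonneg (θ n + θ (n+1)), mul_pos ha hb,
          mul_pos (mul_pos ha ha) hb]
      push_cast
      linarith
  intro k
  have h := key k
  have hk2 : (0:ℝ) < (k:ℝ) + 2 := by positivity
  rw [div_le_div_iff₀ (by norm_num) (hpos k)] at h
  rw [le_div_iff₀ hk2]
  linarith
end

section
/- Let f : ℝⁿ → ℝ be convex and G-Lipschitz, let x₀ ∈ ℝⁿ, and define x_{k+1} = x_k - t_k g_k where g_k ∈ ∂f(x_k) and t_k > 0. Then for all k ≥ 0 and all x ∈ ℝⁿ: (∑_{i=0}^{k} t_i f(x_i) - (G²/2)∑_{i=0}^{k} t_i²)/∑_{i=0}^{k} t_i ≤ f(x) + ‖x₀ - x‖²/(2∑_{i=0}^{k} t_i). -/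
open scoped RealInnerProductSpace
open Finset

theorem subgradient_method_bound
    {E : Type*} [NormedAddCommGroup E] [InnerProductSpace ℝ E]
    (f : E → ℝ) (G : ℝ) (hG : 0 < G)
    (hconv : ConvexOn ℝ Set.univ f)
    (hlip : ∀ x y : E, |f x - f y| ≤ G * ‖x - y‖)
    (x g : ℕ → E) (t : ℕ → ℝ) (ht : ∀ i, 0 < t i)
    (hg : ∀ i, ∀ y : E, f (x i) + ⟪g i, y - x i⟫ ≤ f y)
    (hrec : ∀ i, x (i + 1) = x i - t i • g i) :
    ∀ (k : ℕ) (y : E),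
      ((∑ i ∈ range (k + 1), t i * f (x i))
          - G ^ 2 / 2 * ∑ i ∈ range (k + 1), t i ^ 2)
        / (∑ i ∈ range (k + 1), t i)
      ≤ f y + ‖x 0 - y‖ ^ 2 / (2 * ∑ i ∈ range (k + 1), t i) := by
  -- subgradients are bounded by G
  have hgb : ∀ i, ‖g i‖ ≤ G := by
    intro i
    by_cases h0 : g i = 0
    · simp [h0]; exact hG.le
    · have h1 := hg i (x i + g i)
      have h2 : f (x i) + ‖g i‖ ^ 2 ≤ f (x i + g i) := by
        simpa [real_inner_self_eq_norm_sq] using h1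
      have h3 : f (x i + g i) - f (x i) ≤ G * ‖g i‖ := by
        have := hlip (x i + g i) (x i)
        have := (abs_le.mp this).2
        simpa using this
      have h4 : ‖g i‖ ^ 2 ≤ G * ‖g i‖ := by linarith
      have hng : 0 < ‖g i‖ := norm_pos_iff.mpr h0
      nlinarith
  intro k y
  -- key step inequality
  have step : ∀ i, ‖x (i + 1) - y‖ ^ 2
      ≤ ‖x i - y‖ ^ 2 - 2 * t i * (f (x i) - f y) + G ^ 2 * t i ^ 2 := by
    intro i
    have hexp : ‖x (i + 1) - y‖ ^ 2
        = ‖x i - y‖ ^ 2 - 2 * (t i * ⟪g i, x i - y⟫) + t i ^ 2 * ‖g i‖ ^ 2 := by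
      rw [hrec i, sub_right_comm, norm_sub_sq_real, real_inner_smul_right,
        norm_smul, Real.norm_eq_abs, abs_of_pos (ht i), real_inner_comm]
      ring
    have hinner : f (x i) - f y ≤ ⟪g i, x i - y⟫ := by
      have := hg i y
      have : ⟪g i, y - x i⟫ ≤ f y - f (x i) := by linarith
      have h' : -⟪g i, x i - y⟫ ≤ f y - f (x i) := by
        rw [show y - x i = -(x i - y) from (neg_sub _ _).symm, inner_neg_right] at this
        exact this
      linarith
    have hgn : ‖g i‖ ^ 2 ≤ G ^ 2 := by
      have := hgb i
      nlinarith [norm_nonneg (g i)]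
    have hti := (ht i).le
    nlinarith [mul_le_mul_of_nonneg_left hinner (mul_nonneg (by norm_num : (0:ℝ) ≤ 2) hti),
      mul_le_mul_of_nonneg_left hgn (sq_nonneg (t i))]
  -- telescoping
  have tele : ∀ k, ‖x (k + 1) - y‖ ^ 2
      ≤ ‖x 0 - y‖ ^ 2 - ∑ i ∈ range (k + 1), 2 * t i * (f (x i) - f y)
        + G ^ 2 * ∑ i ∈ range (k + 1), t i ^ 2 := by
    intro k
    induction k with
    | zero => simpa using step 0
    | succ n ih =>
      have := step (n + 1)
      rw [sum_range_succ, sum_range_succ (f := fun i => t i ^ 2)]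
      nlinarith
  have key : ∑ i ∈ range (k + 1), 2 * t i * (f (x i) - f y)
      ≤ ‖x 0 - y‖ ^ 2 + G ^ 2 * ∑ i ∈ range (k + 1), t i ^ 2 := by
    have := tele k
    nlinarith [sq_nonneg ‖x (k + 1) - y‖]
  have hS : 0 < ∑ i ∈ range (k + 1), t i :=
    Finset.sum_pos (fun i _ => ht i) (by simp)
  rw [div_le_iff₀ hS]
  have hexp : ∑ i ∈ range (k + 1), 2 * t i * (f (x i) - f y)
      = 2 * ∑ i ∈ range (k + 1), t i * f (x i)
        - 2 * f y * ∑ i ∈ range (k + 1), t i := by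
    rw [Finset.mul_sum, Finset.mul_sum, ← Finset.sum_sub_distrib]
    exact Finset.sum_congr rfl fun i _ => by ring
  rw [hexp] at key
  have h2S : ‖x 0 - y‖ ^ 2 / (2 * ∑ i ∈ range (k + 1), t i) * (∑ i ∈ range (k + 1), t i)
      = ‖x 0 - y‖ ^ 2 / 2 := by
    field_simp
  have : (f y + ‖x 0 - y‖ ^ 2 / (2 * ∑ i ∈ range (k + 1), t i)) * (∑ i ∈ range (k + 1), t i)
      = f y * (∑ i ∈ range (k + 1), t i) + ‖x 0 - y‖ ^ 2 / 2 := by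
    rw [add_mul, h2S]
  rw [this]
  linarith
end

section
/- Under the subgradient method with constant step sizes t_i = 1/√(k+1) for i = 0,…,k, if the set X̄ of minimizers of a convex G-Lipschitz function f is nonempty, then min_{i=0,…,k} f(x_i) - f̄ ≤ (dist(x₀, X̄)² + G²)/(2√(k+1)), where f̄ is the optimal value. -/
open scoped RealInnerProductSpace
open Finset

theorem subgradient_method_rate
    {E : Type*} [NormedAddCommGroup E] [InnerProductSpace ℝ E]
    (f : E → ℝ) (G : ℝ) (hG : 0 < G)
    (hconv : ConvexOn ℝ Set.univ f)
    (hlip : ∀ x y : E, |f x - f y| ≤ G * ‖x - y‖)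
    (k : ℕ) (x g : ℕ → E)
    (hg : ∀ i, ∀ y : E, f (x i) + ⟪g i, y - x i⟫ ≤ f y)
    (hrec : ∀ i, x (i + 1) = x i - (1 / Real.sqrt (k + 1)) • g i)
    (Xbar : Set E) (hXbar : Xbar = {y : E | ∀ u : E, f y ≤ f u})
    (hne : Xbar.Nonempty)
    (fbar : ℝ) (hfbar : fbar = ⨅ y : E, f y) :
    (range (k + 1)).inf' (by simp) (fun i => f (x i)) - fbar
      ≤ (Metric.infDist (x 0) Xbar ^ 2 + G ^ 2) / (2 * Real.sqrt (k + 1)) := by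
  have hk1 : (0:ℝ) < (k:ℝ)+1 := by positivity
  set s := Real.sqrt ((k:ℝ)+1) with hsdef
  have hspos : 0 < s := Real.sqrt_pos.mpr hk1
  have hs2 : s^2 = (k:ℝ)+1 := Real.sq_sqrt hk1.le
  set t : ℝ := 1/s with htdef
  have ht : 0 < t := by positivity
  set m : ℝ := (range (k + 1)).inf' (by simp) (fun i => f (x i)) with hmdef
  -- subgradient norms are bounded by G
  have hgG : ∀ i, ‖g i‖ ≤ G := by
    intro i
    have h1 := hg i (x i + g i)
    have h2 : |f (x i + g i) - f (x i)| ≤ G * ‖g i‖ := by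
      have := hlip (x i + g i) (x i)
      simpa using this
    have h3 : ⟪g i, (x i + g i) - x i⟫ = ‖g i‖^2 := by
      simp [real_inner_self_eq_norm_sq]
    rcases eq_or_lt_of_le (norm_nonneg (g i)) with h0 | h0
    · rw [← h0]; exact hG.le
    · have hsq : ‖g i‖^2 ≤ G * ‖g i‖ := by
        have := (abs_le.mp h2).2
        rw [h3] at h1; linarith
      nlinarith
  -- key inequality for each minimizer
  have keyall : ∀ xb ∈ Xbar, 2*s*(m - fbar) ≤ ‖x 0 - xb‖^2 + G^2 := by
    intro xb hxbmem
    have hxb : ∀ u : E, f xb ≤ f u := by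
      rw [hXbar] at hxbmem; exact hxbmem
    have hfb : fbar = f xb := by
      rw [hfbar]
      refine le_antisymm (ciInf_le ⟨f xb, ?_⟩ xb) (le_ciInf hxb)
      rintro z ⟨y, rfl⟩; exact hxb y
    have step : ∀ i, 2*t*(f (x i) - f xb)
        ≤ ‖x i - xb‖^2 - ‖x (i+1) - xb‖^2 + t^2 * G^2 := by
      intro i
      have hx : x (i+1) - xb = (x i - xb) - t • g i := by
        rw [hrec i, htdef, hsdef]; push_cast; abel
      have expand : ‖x (i+1) - xb‖^2
          = ‖x i - xb‖^2 - 2*(t*⟪g i, x i - xb⟫) + t^2*‖g i‖^2 := by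
        rw [hx, norm_sub_sq_real, real_inner_smul_right, norm_smul,
          real_inner_comm]
        rw [mul_pow, Real.norm_eq_abs, sq_abs]
      have hinner : f (x i) - f xb ≤ ⟪g i, x i - xb⟫ := by
        have h1 := hg i xb
        have h2 : ⟪g i, xb - x i⟫ = -⟪g i, x i - xb⟫ := by
          rw [← inner_neg_right]; congr 1; abel
        linarith
      have hgn : ‖g i‖^2 ≤ G^2 := by
        have := hgG i; nlinarith [norm_nonneg (g i)]
      nlinarith [mul_le_mul_of_nonneg_left hinner (by positivity : (0:ℝ) ≤ 2*t),
        mul_nonneg (sq_nonneg t) (by linarith : (0:ℝ) ≤ G^2 - ‖g i‖^2)]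
    have hsum : ∑ i ∈ range (k+1), (2*t*(f (x i) - f xb))
        ≤ ‖x 0 - xb‖^2 + ((k:ℝ)+1) * (t^2*G^2) := by
      calc ∑ i ∈ range (k+1), (2*t*(f (x i) - f xb))
          ≤ ∑ i ∈ range (k+1),
              (‖x i - xb‖^2 - ‖x (i+1) - xb‖^2 + t^2*G^2) :=
            Finset.sum_le_sum (fun i _ => step i)
        _ = (‖x 0 - xb‖^2 - ‖x (k+1) - xb‖^2) + ((k:ℝ)+1)*(t^2*G^2) := by
            rw [Finset.sum_add_distrib, Finset.sum_const, card_range,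
              Finset.sum_range_sub' (fun i => ‖x i - xb‖^2)]
            push_cast; ring
        _ ≤ _ := by nlinarith [sq_nonneg ‖x (k+1) - xb‖]
    have hmsum : ((k:ℝ)+1) * (2*t*(m - f xb))
        ≤ ∑ i ∈ range (k+1), (2*t*(f (x i) - f xb)) := by
      have hterm : ∀ i ∈ range (k+1),
          2*t*(m - f xb) ≤ 2*t*(f (x i) - f xb) := by
        intro i hi
        have hm : m ≤ f (x i) := by
          rw [hmdef]; exact Finset.inf'_le _ hi
        nlinarith
      calc ((k:ℝ)+1) * (2*t*(m - f xb))
          = ∑ _i ∈ range (k+1), (2*t*(m - f xb)) := by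
            rw [Finset.sum_const, card_range]; push_cast; ring
        _ ≤ _ := Finset.sum_le_sum hterm
    have hkt : (k:ℝ)+1 = s*s := by rw [← hs2]; ring
    have h1 : ((k:ℝ)+1) * (2*t*(m - f xb)) = 2*s*(m - f xb) := by
      rw [hkt, htdef]; field_simp
    have h2 : ((k:ℝ)+1)*(t^2*G^2) = G^2 := by
      rw [htdef, div_pow, one_pow, hs2]; field_simp
    rw [hfb]
    rw [h1] at hmsum
    rw [h2] at hsum
    linarith
  -- pass to the infimum distance
  rw [le_div_iff₀ (by positivity : (0:ℝ) < 2*s)]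
  rcases le_or_gt (2*s*(m - fbar) - G^2) 0 with h | h
  · nlinarith [sq_nonneg (Metric.infDist (x 0) Xbar)]
  · set c := 2*s*(m - fbar) - G^2 with hcdef
    have hc : ∀ y ∈ Xbar, Real.sqrt c ≤ dist (x 0) y := by
      intro y hy
      have hk := keyall y hy
      have hcle : c ≤ dist (x 0) y ^ 2 := by
        rw [dist_eq_norm]; rw [hcdef]; linarith
      calc Real.sqrt c ≤ Real.sqrt (dist (x 0) y ^ 2) := Real.sqrt_le_sqrt hcle
        _ = dist (x 0) y := Real.sqrt_sq dist_nonneg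
    have hd : Real.sqrt c ≤ Metric.infDist (x 0) Xbar := by
      by_contra hlt
      push_neg at hlt
      obtain ⟨y, hy, hdy⟩ := (Metric.infDist_lt_iff hne).mp hlt
      exact absurd (hc y hy) (not_le.mpr hdy)
    have hcd : c ≤ Metric.infDist (x 0) Xbar ^ 2 := by
      have h1 : Real.sqrt c ^ 2 = c := Real.sq_sqrt h.le
      nlinarith [Real.sqrt_nonneg c]
    nlinarith
end

section
/- Let f : ℝⁿ → ℝ be convex and differentiable with L-Lipschitz gradient, and define x_{k+1} = x_k - (1/L)∇f(x_k). Then for all k ≥ 1 and all x ∈ ℝⁿ: (f(x₁) + ⋯ + f(x_k))/k ≤ f(x) + L‖x₀ - x‖²/(2k). -/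
/-!
Two inequalities drive the estimate. Convexity gives `f x ≤ f y + ⟪∇f x, x - y⟫`, and the
Lipschitz gradient gives the descent lemma `f x⁺ ≤ f x - ‖∇f x‖² / (2L)` for the step
`x⁺ = x - ∇f x / L`. Together they say `f x⁺ ≤ f y + (L/2)(‖x - y‖² - ‖x⁺ - y‖²)`, which
telescopes along the iterates to `f x₁ + ⋯ + f x_k ≤ k f y + (L/2)‖x₀ - y‖²`.
-/

open scoped RealInnerProductSpace
open Finset AffineMap

section

variable {E : Type*} [NormedAddCommGroup E] [InnerProductSpace ℝ E] [CompleteSpace E]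
  {f : E → ℝ} {g : E}

theorem HasGradientAt.hasDerivAt_comp_lineMap {p q : E} {t : ℝ}
    (h : HasGradientAt f g (lineMap p q t)) :
    HasDerivAt (f ∘ lineMap p q) ⟪g, q - p⟫ t := by
  simpa [InnerProductSpace.toDual_apply_apply] using
    h.hasFDerivAt.comp_hasDerivAt t hasDerivAt_lineMap

theorem ConvexOn.add_inner_sub_le_of_hasGradientAt {s : Set E} {p q : E}
    (hf : ConvexOn ℝ s f) (hp : p ∈ s) (hq : q ∈ s) (h : HasGradientAt f g p) :
    f p + ⟪g, q - p⟫ ≤ f q := by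
  have hderiv : HasDerivAt (f ∘ lineMap p q) ⟪g, q - p⟫ (0 : ℝ) :=
    HasGradientAt.hasDerivAt_comp_lineMap (by rwa [lineMap_apply_zero])
  have hslope := (hf.comp_affineMap (lineMap p q)).le_slope_of_hasDerivAt
    (by simpa using hp) (by simpa using hq) zero_lt_one hderiv
  simp only [slope_def_field, Function.comp_apply, lineMap_apply_one, lineMap_apply_zero,
    sub_zero, div_one] at hslope
  linarith

theorem le_add_inner_add_sq_of_lipschitz_gradient {f' : E → E} {L : ℝ}
    (hf : ∀ x, HasGradientAt f (f' x) x) (hlip : ∀ x y, ‖f' x - f' y‖ ≤ L * ‖x - y‖)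
    (p q : E) :
    f q ≤ f p + ⟪f' p, q - p⟫ + L / 2 * ‖q - p‖ ^ 2 := by
  set φ : ℝ → ℝ := fun t => f (lineMap p q t) - t * ⟪f' p, q - p⟫
  set B : ℝ → ℝ := fun t => f p + L / 2 * t ^ 2 * ‖q - p‖ ^ 2
  have hφ (t : ℝ) : HasDerivAt φ ⟪f' (lineMap p q t) - f' p, q - p⟫ t := by
    rw [inner_sub_left]
    exact (hf _).hasDerivAt_comp_lineMap.sub
      ((hasDerivAt_id t).mul_const _ |>.congr_deriv (one_mul _))
  have hB (t : ℝ) : HasDerivAt B (L * t * ‖q - p‖ ^ 2) t :=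
    (((hasDerivAt_pow 2 t).const_mul (L / 2)).mul_const _ |>.const_add (f p)).congr_deriv
      (by push_cast; ring)
  have hbound (t : ℝ) (ht : 0 ≤ t) :
      ⟪f' (lineMap p q t) - f' p, q - p⟫ ≤ L * t * ‖q - p‖ ^ 2 :=
    calc _ ≤ ‖f' (lineMap p q t) - f' p‖ * ‖q - p‖ := real_inner_le_norm _ _
      _ ≤ L * ‖lineMap p q t - p‖ * ‖q - p‖ := by gcongr; exact hlip _ _
      _ = L * t * ‖q - p‖ ^ 2 := by
        rw [← dist_eq_norm, dist_lineMap_left, dist_eq_norm', Real.norm_of_nonneg ht]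
        ring
  have hφB := image_le_of_deriv_right_le_deriv_boundary (f := φ) (B := B)
    (fun t _ => (hφ t).continuousAt.continuousWithinAt) (fun t _ => (hφ t).hasDerivWithinAt)
    (by simp [φ, B]) (fun t _ => (hB t).continuousAt.continuousWithinAt)
    (fun t _ => (hB t).hasDerivWithinAt) (fun t ht => hbound t ht.1)
    (Set.right_mem_Icc.2 zero_le_one)
  simp only [φ, B, lineMap_apply_one, one_mul, one_pow] at hφB
  linarith

theorem ConvexOn.apply_gradient_step_le {f' : E → E} {L : ℝ} (hL : L ≠ 0)
    (hconv : ConvexOn ℝ Set.univ f) (hf : ∀ x, HasGradientAt f (f' x) x)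
    (hlip : ∀ x y, ‖f' x - f' y‖ ≤ L * ‖x - y‖) (p y : E) :
    f (p - (1 / L) • f' p) ≤ f y + L / 2 * (‖p - y‖ ^ 2 - ‖p - (1 / L) • f' p - y‖ ^ 2) := by
  have sufficient_decrease : f (p - (1 / L) • f' p) ≤ f p - ‖f' p‖ ^ 2 / (2 * L) := by
    have h := le_add_inner_add_sq_of_lipschitz_gradient hf hlip p (p - (1 / L) • f' p)
    rw [sub_sub_cancel_left, inner_neg_right, real_inner_smul_right, real_inner_self_eq_norm_sq,
      norm_neg, norm_smul, mul_pow, Real.norm_eq_abs, sq_abs] at h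
    convert h using 1
    field_simp
    ring
  have first_order :=
    hconv.add_inner_sub_le_of_hasGradientAt (Set.mem_univ p) (Set.mem_univ y) (hf p)
  have distance_decrease : L / 2 * (‖p - y‖ ^ 2 - ‖p - (1 / L) • f' p - y‖ ^ 2)
      = ⟪f' p, p - y⟫ - ‖f' p‖ ^ 2 / (2 * L) := by
    rw [sub_right_comm, norm_sub_sq_real (p - y), real_inner_smul_right, norm_smul, mul_pow,
      Real.norm_eq_abs, sq_abs, real_inner_comm]
    field_simp
    ring
  rw [← neg_sub p y, inner_neg_right] at first_order
  rw [distance_decrease]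
  linarith

end

theorem sum_Icc_le_of_le_add_sub {u D : ℕ → ℝ} {c : ℝ}
    (h : ∀ i, u (i + 1) ≤ c + (D i - D (i + 1))) (k : ℕ) :
    ∑ i ∈ Icc 1 k, u i ≤ k * c + (D 0 - D k) := by
  induction k with
  | zero => simp
  | succ k ih =>
    rw [sum_Icc_succ_top (Nat.le_add_left 1 k)]
    push_cast
    linarith [h k]

theorem gradient_method_average_bound
    {E : Type*} [NormedAddCommGroup E] [InnerProductSpace ℝ E] [CompleteSpace E]
    (f : E → ℝ) (f' : E → E) (L : ℝ) (hL : 0 < L)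
    (hconv : ConvexOn ℝ Set.univ f)
    (hdiff : ∀ x : E, HasGradientAt f (f' x) x)
    (hlip : ∀ x y : E, ‖f' x - f' y‖ ≤ L * ‖x - y‖)
    (x : ℕ → E) (hrec : ∀ k, x (k + 1) = x k - (1 / L) • f' (x k)) :
    ∀ k : ℕ, 1 ≤ k → ∀ y : E,
      (∑ i ∈ Icc 1 k, f (x i)) / k ≤ f y + L * ‖x 0 - y‖ ^ 2 / (2 * k) := by
  intro k hk y
  have hsum := sum_Icc_le_of_le_add_sub (u := fun i => f (x i)) (c := f y)
    (D := fun i => L / 2 * ‖x i - y‖ ^ 2) (fun i => by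
      simpa only [hrec i, mul_sub] using hconv.apply_gradient_step_le hL.ne' hdiff hlip (x i) y) k
  have hk : (0 : ℝ) < k := by exact_mod_cast hk
  have hscale : L * ‖x 0 - y‖ ^ 2 / (2 * k) * k = L / 2 * ‖x 0 - y‖ ^ 2 := by field_simp
  rw [div_le_iff₀ hk, add_mul, hscale]
  linarith [show 0 ≤ L / 2 * ‖x k - y‖ ^ 2 by positivity]
end

section
/- In the accelerated gradient method, define z₁ = ∇f(x₀), μ₁ = L, g_k = ∇f(y_k), z_{k+1} = (1-θ_k)z_k + θ_k g_k, and μ_{k+1} = (1-θ_k)μ_k. Then for all k ≥ 1: y_k = (1-θ_k)x_k + θ_k(x₀ - z_k/μ_k) and x_{k+1} = (1-θ_k)x_k + θ_k(x₀ - z_{k+1}/μ_{k+1}). -/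
open scoped RealInnerProductSpace

/-!
Write `w k = x₀ - μ_k⁻¹ z_k`. Since `μ_{k+1} = L θ_k²`, the `z`-recursion gives
`θ_k w_{k+1} = θ_k w_k - g_k / L`, so a gradient step from `y_k = (1-θ_k) x_k + θ_k w_k`
lands on `x_{k+1} = (1-θ_k) x_k + θ_k w_{k+1}`; conversely, solving this for `w_{k+1}` shows that
the momentum step produces `y_{k+1} = (1-θ_{k+1}) x_{k+1} + θ_{k+1} w_{k+1}`. The second identity
also holds at `k = 0` because `θ₀ = 1`, which starts the induction.
-/

namespace AcceleratedGradient

section Module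

variable {K M : Type*} [Field K] [AddCommGroup M] [Module K M]

theorem momentum_step_eq {θ θ' : K} {x x' w : M} (hθ : θ ≠ 0)
    (h : x' = (1 - θ) • x + θ • w) :
    x' + (θ' * (1 - θ) / θ) • (x' - x) = (1 - θ') • x' + θ' • w := by
  have hw : w = θ⁻¹ • (x' - (1 - θ) • x) := by
    rw [h]
    match_scalars
    · field_simp
    · field_simp
      ring
  rw [hw]
  match_scalars
  · field_simp
    ring
  · field_simp

theorem gradient_step_eq {θ μ μ' L : K} {x₀ x y z g : M} (hθ : θ ≠ 0) (hθ1 : 1 - θ ≠ 0)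
    (hμ : μ' = (1 - θ) * μ) (hμL : μ' = L * θ ^ 2)
    (hy : y = (1 - θ) • x + θ • (x₀ - μ⁻¹ • z)) :
    y - (1 / L) • g = (1 - θ) • x + θ • (x₀ - μ'⁻¹ • ((1 - θ) • z + θ • g)) := by
  have hz : μ'⁻¹ * (1 - θ) = μ⁻¹ := by
    rw [hμ, mul_inv, mul_comm, ← mul_assoc, mul_inv_cancel₀ hθ1, one_mul]
  have hg : μ'⁻¹ * θ ^ 2 = 1 / L := by
    rw [hμL, mul_inv, mul_assoc, inv_mul_cancel₀ (pow_ne_zero 2 hθ), mul_one, one_div]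
  rw [hy]
  match_scalars
  · ring
  · ring
  · linear_combination θ * hz
  · linear_combination hg

end Module

theorem succ_eq_mul_sq {R : Type*} [CommRing R] {θ μ : ℕ → R} {L : R}
    (hθ0 : θ 0 = 1) (hθrec : ∀ k, θ (k + 1) ^ 2 = θ k ^ 2 * (1 - θ (k + 1)))
    (hμ1 : μ 1 = L) (hμrec : ∀ k, 1 ≤ k → μ (k + 1) = (1 - θ k) * μ k) (k : ℕ) :
    μ (k + 1) = L * θ k ^ 2 := by
  induction k with
  | zero => rw [hμ1, hθ0]; ring
  | succ n ih =>
    rw [hμrec (n + 1) n.succ_pos, ih, hθrec n]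
    ring

end AcceleratedGradient

theorem accelerated_gradient_z_representation_general
    {E : Type*} [NormedAddCommGroup E] [InnerProductSpace ℝ E]
    (f' : E → E) (L : ℝ)
    (x y : ℕ → E) (θ : ℕ → ℝ)
    (hy0 : y 0 = x 0) (hθ0 : θ 0 = 1)
    (hx : ∀ k, x (k + 1) = y k - (1 / L) • f' (y k))
    (hθmem : ∀ k, θ (k + 1) ∈ Set.Ioo (0 : ℝ) 1)
    (hθrec : ∀ k, θ (k + 1) ^ 2 = θ k ^ 2 * (1 - θ (k + 1)))
    (hyrec : ∀ k, y (k + 1)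
      = x (k + 1) + (θ (k + 1) * (1 - θ k) / θ k) • (x (k + 1) - x k))
    (z : ℕ → E) (μ : ℕ → ℝ)
    (hz1 : z 1 = f' (x 0)) (hμ1 : μ 1 = L)
    (hzrec : ∀ k, 1 ≤ k → z (k + 1) = (1 - θ k) • z k + θ k • f' (y k))
    (hμrec : ∀ k, 1 ≤ k → μ (k + 1) = (1 - θ k) * μ k) :
    ∀ k : ℕ, 1 ≤ k →
      y k = (1 - θ k) • x k + θ k • (x 0 - (μ k)⁻¹ • z k) ∧
      x (k + 1) = (1 - θ k) • x k + θ k • (x 0 - (μ (k + 1))⁻¹ • z (k + 1)) := by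
  have hθ : ∀ k, θ k ≠ 0
    | 0 => by simp [hθ0]
    | k + 1 => (hθmem k).1.ne'
  have hμ := AcceleratedGradient.succ_eq_mul_sq hθ0 hθrec hμ1 hμrec
  have hmomentum : ∀ k, x (k + 1) = (1 - θ k) • x k + θ k • (x 0 - (μ (k + 1))⁻¹ • z (k + 1)) →
      y (k + 1) = (1 - θ (k + 1)) • x (k + 1) + θ (k + 1) • (x 0 - (μ (k + 1))⁻¹ • z (k + 1)) :=
    fun k h => (hyrec k).trans (AcceleratedGradient.momentum_step_eq (hθ k) h)
  have hx_rep : ∀ k,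
      x (k + 1) = (1 - θ k) • x k + θ k • (x 0 - (μ (k + 1))⁻¹ • z (k + 1)) := by
    intro k
    induction k with
    | zero => simp [hx 0, hy0, hθ0, hz1, hμ1]
    | succ k ih =>
      rw [hx, hzrec (k + 1) k.succ_pos]
      exact AcceleratedGradient.gradient_step_eq (hθ (k + 1)) (sub_ne_zero.2 (hθmem k).2.ne')
        (hμrec (k + 1) k.succ_pos) (hμ (k + 1)) (hmomentum k ih)
  intro k hk
  obtain ⟨k, rfl⟩ := Nat.exists_eq_add_of_le' hk
  exact ⟨hmomentum k (hx_rep k), hx_rep (k + 1)⟩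

theorem accelerated_gradient_z_representation
    {E : Type*} [NormedAddCommGroup E] [InnerProductSpace ℝ E] [CompleteSpace E]
    (f : E → ℝ) (f' : E → E) (L : ℝ) (hL : 0 < L)
    (hconv : ConvexOn ℝ Set.univ f)
    (hdiff : ∀ x : E, HasGradientAt f (f' x) x)
    (hlip : ∀ x y : E, ‖f' x - f' y‖ ≤ L * ‖x - y‖)
    (x y : ℕ → E) (θ : ℕ → ℝ)
    (hy0 : y 0 = x 0) (hθ0 : θ 0 = 1)
    (hx : ∀ k, x (k + 1) = y k - (1 / L) • f' (y k))
    (hθmem : ∀ k, θ (k + 1) ∈ Set.Ioo (0 : ℝ) 1)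
    (hθrec : ∀ k, θ (k + 1) ^ 2 = θ k ^ 2 * (1 - θ (k + 1)))
    (hyrec : ∀ k, y (k + 1)
      = x (k + 1) + (θ (k + 1) * (1 - θ k) / θ k) • (x (k + 1) - x k))
    (z : ℕ → E) (μ : ℕ → ℝ)
    (hz1 : z 1 = f' (x 0)) (hμ1 : μ 1 = L)
    (hzrec : ∀ k, 1 ≤ k → z (k + 1) = (1 - θ k) • z k + θ k • f' (y k))
    (hμrec : ∀ k, 1 ≤ k → μ (k + 1) = (1 - θ k) * μ k) :
    ∀ k : ℕ, 1 ≤ k →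
      y k = (1 - θ k) • x k + θ k • (x 0 - (μ k)⁻¹ • z k) ∧
      x (k + 1) = (1 - θ k) • x k + θ k • (x 0 - (μ (k + 1))⁻¹ • z (k + 1)) :=
  accelerated_gradient_z_representation_general f' L x y θ hy0 hθ0 hx hθmem hθrec hyrec z μ hz1 hμ1
    hzrec hμrec
end

section
/- Let f : ℝⁿ → ℝ be convex and G-Lipschitz and run the subgradient method x_{i+1} = x_i - t_i g_i with g_i ∈ ∂f(x_i), t_i > 0. Define z_k = (∑_{i=0}^{k} t_i g_i)/(∑_{i=0}^{k} t_i) and μ_k = 1/∑_{i=0}^{k} t_i. Then for all k ≥ 0: (∑_{i=0}^{k} t_i f(x_i) - (G²/2)∑_{i=0}^{k} t_i²)·μ_k ≤ -f*(z_k) + ⟪z_k, x₀⟫ - ‖z_k‖²/(2μ_k). -/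
open scoped RealInnerProductSpace
open Finset

noncomputable def conj {E : Type*} [NormedAddCommGroup E] [InnerProductSpace ℝ E]
    (f : E → ℝ) (z : E) : EReal :=
  ⨆ x : E, ((⟪z, x⟫ - f x : ℝ) : EReal)

theorem subgradient_method_conjugate_bound
    {E : Type*} [NormedAddCommGroup E] [InnerProductSpace ℝ E]
    (f : E → ℝ) (G : ℝ) (hG : 0 < G)
    (hconv : ConvexOn ℝ Set.univ f)
    (hlip : ∀ x y : E, |f x - f y| ≤ G * ‖x - y‖)
    (x g : ℕ → E) (t : ℕ → ℝ) (ht : ∀ i, 0 < t i)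
    (hg : ∀ i, ∀ y : E, f (x i) + ⟪g i, y - x i⟫ ≤ f y)
    (hrec : ∀ i, x (i + 1) = x i - t i • g i)
    (z : ℕ → E) (μ : ℕ → ℝ)
    (hμ : ∀ k, μ k = 1 / ∑ i ∈ range (k + 1), t i)
    (hz : ∀ k, z k = (μ k) • ∑ i ∈ range (k + 1), t i • g i) :
    ∀ k : ℕ,
      conj f (z k)
        + ((((∑ i ∈ range (k + 1), t i * f (x i))
              - G ^ 2 / 2 * ∑ i ∈ range (k + 1), t i ^ 2) * μ k : ℝ) : EReal)
      ≤ ((⟪z k, x 0⟫ - ‖z k‖ ^ 2 / (2 * μ k) : ℝ) : EReal) := by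
  -- subgradient norms are bounded by G
  have hgG : ∀ i, ‖g i‖ ≤ G := by
    intro i
    rcases eq_or_ne (g i) 0 with h | h
    · simp [h, hG.le]
    · have h1 := hg i (x i + g i)
      have h2 := hlip (x i + g i) (x i)
      simp only [add_sub_cancel_left] at h1 h2
      rw [real_inner_self_eq_norm_sq] at h1
      have h3 : f (x i + g i) - f (x i) ≤ G * ‖g i‖ := (abs_le.mp h2).2
      have hgpos : 0 < ‖g i‖ := norm_pos_iff.mpr h
      nlinarith [hgpos]
  intro k
  set s : ℕ → E := fun n => ∑ i ∈ range n, t i • g i with hs_def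
  have hS : 0 < ∑ i ∈ range (k + 1), t i :=
    Finset.sum_pos (fun i _ => ht i) (by simp)
  have hμpos : 0 < μ k := by rw [hμ]; positivity
  have hμS : μ k * ∑ i ∈ range (k + 1), t i = 1 := by
    rw [hμ]; field_simp
  -- x n = x 0 - s n
  have hx : ∀ n, x n = x 0 - s n := by
    intro n
    induction n with
    | zero => simp [hs_def]
    | succ n ih =>
      rw [hrec, ih]
      simp only [hs_def, Finset.sum_range_succ]
      abel
  have hs_succ : ∀ i, s (i + 1) = s i + t i • g i := by
    intro i; simp [hs_def, Finset.sum_range_succ]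
  -- key identity for each i
  have hid : ∀ i, t i * ⟪g i, x i⟫ =
      ⟪t i • g i, x 0⟫ - (‖s (i+1)‖^2 - ‖s i‖^2 - ‖t i • g i‖^2)/2 := by
    intro i
    have hnorm : ‖s (i+1)‖^2 = ‖s i‖^2 + 2 * ⟪s i, t i • g i⟫ + ‖t i • g i‖^2 := by
      rw [hs_succ i]; exact norm_add_sq_real _ _
    have h4 : (‖s (i+1)‖^2 - ‖s i‖^2 - ‖t i • g i‖^2)/2 = ⟪s i, t i • g i⟫ := by
      linarith
    rw [h4, real_inner_smul_left, real_inner_smul_right, hx i, inner_sub_right,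
      real_inner_comm (g i) (s i)]
    ring
  -- summed identity
  have hsumA : ∑ i ∈ range (k+1), t i * ⟪g i, x i⟫ =
      ⟪s (k+1), x 0⟫ - ‖s (k+1)‖^2/2 + (∑ i ∈ range (k+1), ‖t i • g i‖^2)/2 := by
    have htel : ∑ i ∈ range (k+1), (‖s (i+1)‖^2 - ‖s i‖^2) = ‖s (k+1)‖^2 := by
      rw [Finset.sum_range_sub (fun n => ‖s n‖^2)]
      simp [hs_def]
    have hsum_inner : ∑ i ∈ range (k+1), ⟪t i • g i, x 0⟫ = ⟪s (k+1), x 0⟫ := by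
      rw [hs_def]; exact (sum_inner _ _ _).symm
    calc ∑ i ∈ range (k+1), t i * ⟪g i, x i⟫
        = ∑ i ∈ range (k+1), (⟪t i • g i, x 0⟫
            - ((‖s (i+1)‖^2 - ‖s i‖^2) - ‖t i • g i‖^2)/2) := by
          refine Finset.sum_congr rfl fun i _ => ?_
          exact hid i
      _ = (∑ i ∈ range (k+1), ⟪t i • g i, x 0⟫)
            - ((∑ i ∈ range (k+1), (‖s (i+1)‖^2 - ‖s i‖^2))
              - ∑ i ∈ range (k+1), ‖t i • g i‖^2)/2 := by
          simp only [Finset.sum_sub_distrib, ← Finset.sum_div]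
      _ = ⟪s (k+1), x 0⟫ - ‖s (k+1)‖^2/2 + (∑ i ∈ range (k+1), ‖t i • g i‖^2)/2 := by
          rw [htel, hsum_inner]; ring
  -- bound on sum of squared step norms
  have hsq : ∑ i ∈ range (k+1), ‖t i • g i‖^2 ≤ G^2 * ∑ i ∈ range (k+1), t i ^2 := by
    rw [Finset.mul_sum]
    refine Finset.sum_le_sum fun i _ => ?_
    rw [norm_smul, mul_pow]
    have : ‖g i‖^2 ≤ G^2 := by
      have := hgG i
      nlinarith [norm_nonneg (g i)]
    have h2 : ‖t i‖^2 = t i ^2 := by rw [Real.norm_eq_abs, sq_abs]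
    rw [h2]
    nlinarith [sq_nonneg (t i)]
  -- reduce to a real inequality for each y
  rw [conj]
  have key : ∀ y : E,
      (⟪z k, y⟫ - f y : ℝ) ≤
        (⟪z k, x 0⟫ - ‖z k‖ ^ 2 / (2 * μ k))
          - ((∑ i ∈ range (k + 1), t i * f (x i))
              - G ^ 2 / 2 * ∑ i ∈ range (k + 1), t i ^ 2) * μ k := by
    intro y
    -- subgradient inequality summed
    have hB : ∑ i ∈ range (k+1), t i * f (x i) + ⟪s (k+1), y⟫
        - ∑ i ∈ range (k+1), t i * ⟪g i, x i⟫
        ≤ (∑ i ∈ range (k+1), t i) * f y := by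
      have hsum_inner : ∑ i ∈ range (k+1), t i * ⟪g i, y⟫ = ⟪s (k+1), y⟫ := by
        rw [hs_def, sum_inner]
        exact Finset.sum_congr rfl fun i _ => (real_inner_smul_left _ _ _).symm
      have := Finset.sum_le_sum (f := fun i => t i * (f (x i) + ⟪g i, y - x i⟫))
        (g := fun i => t i * f y) (s := range (k+1))
        (fun i _ => mul_le_mul_of_nonneg_left (hg i y) (ht i).le)
      rw [← Finset.sum_mul] at this
      have hexp : ∑ i ∈ range (k+1), t i * (f (x i) + ⟪g i, y - x i⟫)
          = ∑ i ∈ range (k+1), t i * f (x i) + ⟪s (k+1), y⟫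
            - ∑ i ∈ range (k+1), t i * ⟪g i, x i⟫ := by
        rw [← hsum_inner, ← Finset.sum_add_distrib, ← Finset.sum_sub_distrib]
        refine Finset.sum_congr rfl fun i _ => ?_
        rw [inner_sub_right]; ring
      linarith [hexp ▸ this]
    -- combine with hsumA, hsq
    have hcomb : ⟪s (k+1), y⟫ - (∑ i ∈ range (k+1), t i) * f y
        ≤ ⟪s (k+1), x 0⟫ - ‖s (k+1)‖^2/2 + G^2/2 * ∑ i ∈ range (k+1), t i ^2
          - ∑ i ∈ range (k+1), t i * f (x i) := by
      have := hsumA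
      linarith
    -- z k = μ k • s (k+1)
    have hzk : z k = μ k • s (k+1) := by rw [hz, hs_def]
    have hzy : ⟪z k, y⟫ = μ k * ⟪s (k+1), y⟫ := by
      rw [hzk, real_inner_smul_left]
    have hzx : ⟪z k, x 0⟫ = μ k * ⟪s (k+1), x 0⟫ := by
      rw [hzk, real_inner_smul_left]
    have hzn : ‖z k‖^2 = μ k ^2 * ‖s (k+1)‖^2 := by
      rw [hzk, norm_smul, mul_pow, Real.norm_eq_abs, sq_abs]
    have hfy : f y = μ k * ((∑ i ∈ range (k+1), t i) * f y) := by
      rw [← mul_assoc, hμS, one_mul]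
    rw [hzy, hzx, hzn]
    rw [show μ k ^2 * ‖s (k+1)‖^2 / (2 * μ k) = μ k * (‖s (k+1)‖^2/2) by
      field_simp]
    nlinarith [mul_le_mul_of_nonneg_left hcomb hμpos.le]
  have h1 : (⨆ y : E, ((⟪z k, y⟫ - f y : ℝ) : EReal))
      ≤ (((⟪z k, x 0⟫ - ‖z k‖ ^ 2 / (2 * μ k))
          - ((∑ i ∈ range (k + 1), t i * f (x i))
              - G ^ 2 / 2 * ∑ i ∈ range (k + 1), t i ^ 2) * μ k : ℝ) : EReal) :=
    iSup_le fun y => EReal.coe_le_coe_iff.mpr (key y)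
  calc (⨆ y : E, ((⟪z k, y⟫ - f y : ℝ) : EReal))
        + ((((∑ i ∈ range (k + 1), t i * f (x i))
              - G ^ 2 / 2 * ∑ i ∈ range (k + 1), t i ^ 2) * μ k : ℝ) : EReal)
      ≤ (((⟪z k, x 0⟫ - ‖z k‖ ^ 2 / (2 * μ k))
          - ((∑ i ∈ range (k + 1), t i * f (x i))
              - G ^ 2 / 2 * ∑ i ∈ range (k + 1), t i ^ 2) * μ k : ℝ) : EReal)
        + ((((∑ i ∈ range (k + 1), t i * f (x i))
              - G ^ 2 / 2 * ∑ i ∈ range (k + 1), t i ^ 2) * μ k : ℝ) : EReal) :=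
        add_le_add h1 le_rfl
    _ = ((⟪z k, x 0⟫ - ‖z k‖ ^ 2 / (2 * μ k) : ℝ) : EReal) := by
        rw [← EReal.coe_add]; norm_num
end
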